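/- arXiv:0903.2716 — 4 statements merged into one kernel-verified Lean document; each statement's English description precedes it below -/
import Mathlib

section
/- Let Γ = (Γ(1),…,Γ(d)) : ℝ → ℝ^d be continuously differentiable. Then the canonical lift satisfies the Chen (multiplicative) property: for every n ≥ 2, every word (i_1,…,i_n) ∈ {1,…,d}^n, and all s, u, t ∈ ℝ, Γ^{cano,n}_{ts}(i_1,…,i_n) − Γ^{cano,n}_{tu}(i_1,…,i_n) − Γ^{cano,n}_{us}(i_1,…,i_n) = Σ_{k=1}^{n−1} Γ^{cano,k}_{tu}(i_1,…,i_k) · Γ^{cano,n−k}_{us}(i_{k+1},…,i_n). -/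
/-! Chen's identity `Γ_{ts} = Γ_{tu} ⊗ Γ_{us}` comes from splitting the outermost integral at `u`:
the part over `[s, u]` is the level-`n` term `Γ_{us}`, while in the part over `[u, t]` the inner
lift `Γ_{xs}` is expanded by induction, and each summand integrates to a lift over `[u, t]`
times a lift over `[s, u]`. -/

/-- The canonical lift of a path `Γ : ℝ → ℝ^d`: the nested iterated integrals
`Γ^{cano,n}_{ts}(i₁,…,iₙ) = ∫_s^t Γ'(i₁)(x₁) ∫_s^{x₁} Γ'(i₂)(x₂) ⋯ dx₂ dx₁`. -/
noncomputable def canoLift {d : ℕ} (Γ : ℝ → Fin d → ℝ) :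
    (n : ℕ) → (Fin n → Fin d) → ℝ → ℝ → ℝ
  | 0, _, _, _ => 1
  | n + 1, w, t, s =>
      ∫ x in s..t, deriv (fun y => Γ y (w 0)) x * canoLift Γ n (fun j => w j.succ) x s

open Finset

theorem ContDiff.continuous_deriv_apply {ι : Type*} [Fintype ι] {Γ : ℝ → ι → ℝ}
    (hΓ : ContDiff ℝ 1 Γ) (i : ι) : Continuous (deriv fun y => Γ y i) :=
  (contDiff_pi.1 hΓ i).continuous_deriv le_rfl

namespace canoLift

variable {d : ℕ} {Γ : ℝ → Fin d → ℝ}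

theorem continuous (hΓ : ∀ i, Continuous (deriv fun y => Γ y i)) {n : ℕ} (w : Fin n → Fin d)
    (s : ℝ) : Continuous fun t => canoLift Γ n w t s := by
  induction n with
  | zero => exact continuous_const
  | succ n ih =>
    exact intervalIntegral.continuous_primitive
      (fun a b => ((hΓ _).mul (ih _)).intervalIntegrable a b) s

theorem succ_eq_add_integral (hΓ : ∀ i, Continuous (deriv fun y => Γ y i)) {n : ℕ}
    (w : Fin (n + 1) → Fin d) (t u s : ℝ) :
    canoLift Γ (n + 1) w t s = canoLift Γ (n + 1) w u s +
      ∫ x in u..t, deriv (fun y => Γ y (w 0)) x * canoLift Γ n (fun j => w j.succ) x s :=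
  (intervalIntegral.integral_add_adjacent_intervals
    (((hΓ _).mul (continuous hΓ _ s)).intervalIntegrable s u)
    (((hΓ _).mul (continuous hΓ _ s)).intervalIntegrable u t)).symm

end canoLift

/-- Indexing words by a sequence `v : ℕ → Fin d` lets a word be cut into a prefix and the suffix
`fun j => v (k + j)` without casts between `Fin` types. -/
noncomputable def canoLiftPrefix {d : ℕ} (Γ : ℝ → Fin d → ℝ) (v : ℕ → Fin d) (n : ℕ) (t s : ℝ) :
    ℝ :=
  canoLift Γ n (fun j => v j) t s

theorem canoLift_eq_canoLiftPrefix {d n : ℕ} {Γ : ℝ → Fin d → ℝ} {w : Fin n → Fin d}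
    {v : ℕ → Fin d} (hv : ∀ j : Fin n, v j = w j) (t s : ℝ) :
    canoLift Γ n w t s = canoLiftPrefix Γ v n t s := by
  rw [canoLiftPrefix, funext hv]

namespace canoLiftPrefix

variable {d : ℕ} {Γ : ℝ → Fin d → ℝ}

@[simp]
theorem zero (v : ℕ → Fin d) (t s : ℝ) : canoLiftPrefix Γ v 0 t s = 1 := rfl

theorem continuous (hΓ : ∀ i, Continuous (deriv fun y => Γ y i)) (v : ℕ → Fin d) (n : ℕ)
    (s : ℝ) : Continuous fun t => canoLiftPrefix Γ v n t s :=
  canoLift.continuous hΓ _ s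

theorem chen (hΓ : ∀ i, Continuous (deriv fun y => Γ y i)) (v : ℕ → Fin d) (n : ℕ)
    (t u s : ℝ) : canoLiftPrefix Γ v n t s =
      ∑ k ∈ range (n + 1),
        canoLiftPrefix Γ v k t u * canoLiftPrefix Γ (fun j => v (k + j)) (n - k) u s := by
  induction n generalizing v t with
  | zero => simp
  | succ n ih =>
    set f := deriv fun y => Γ y (v 0)
    have expand_inner (x : ℝ) : f x * canoLiftPrefix Γ (fun j => v (j + 1)) n x s =
        ∑ k ∈ range (n + 1), f x * canoLiftPrefix Γ (fun j => v (j + 1)) k x u *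
          canoLiftPrefix Γ (fun j => v (k + 1 + j)) (n - k) u s := by
      rw [ih, mul_sum]
      refine sum_congr rfl fun k _ => ?_
      rw [← mul_assoc]
      congr 3
      ext j
      rw [add_right_comm]
    have integrate_summands : (∫ x in u..t, f x * canoLiftPrefix Γ (fun j => v (j + 1)) n x s) =
        ∑ k ∈ range (n + 1), canoLiftPrefix Γ v (k + 1) t u *
          canoLiftPrefix Γ (fun j => v (k + 1 + j)) (n - k) u s := by
      rw [intervalIntegral.integral_congr fun x _ => expand_inner x,
        intervalIntegral.integral_finsetSum fun k _ => ?_]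
      · exact sum_congr rfl fun k _ => intervalIntegral.integral_mul_const _ _
      · exact (((hΓ _).mul (continuous hΓ _ k u)).mul continuous_const).intervalIntegrable u t
    calc canoLiftPrefix Γ v (n + 1) t s
        = canoLiftPrefix Γ v (n + 1) u s +
            ∫ x in u..t, f x * canoLiftPrefix Γ (fun j => v (j + 1)) n x s :=
          canoLift.succ_eq_add_integral hΓ _ t u s
      _ = _ := by
        rw [integrate_summands, sum_range_succ' _ (n + 1)]
        simp [add_comm]

end canoLiftPrefix

theorem Fin.sum_filter_val_pos_eq_sum_range {M : Type*} [AddCommMonoid M] (m : ℕ) (g : ℕ → M) :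
    ∑ k ∈ univ.filter (fun k : Fin (m + 1) => 0 < k.1), g k = ∑ i ∈ range m, g (i + 1) := by
  rw [sum_filter, Fin.sum_univ_succ, ← Fin.sum_univ_eq_sum_range]
  simp

/-- The canonical lift of a continuously differentiable path satisfies the
multiplicative (Chen) property. -/
theorem canonical_lift_chen (d : ℕ) (Γ : ℝ → Fin d → ℝ) (hΓ : ContDiff ℝ 1 Γ)
    (n : ℕ) (hn : 2 ≤ n) (w : Fin n → Fin d) (s u t : ℝ) :
    canoLift Γ n w t s - canoLift Γ n w t u - canoLift Γ n w u s =
      ∑ k ∈ Finset.univ.filter (fun k : Fin n => 0 < k.1),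
        canoLift Γ k.1 (fun j => w ⟨j.1, by have h1 := j.isLt; have h2 := k.isLt; omega⟩) t u *
          canoLift Γ (n - k.1)
            (fun j => w ⟨k.1 + j.1, by have h1 := j.isLt; have h2 := k.isLt; omega⟩) u s := by
  obtain ⟨m, rfl⟩ : ∃ m, n = m + 1 := ⟨n - 1, by omega⟩
  obtain ⟨v, hv⟩ : ∃ v : ℕ → Fin d, ∀ j : Fin (m + 1), v j = w j :=
    ⟨fun j => if h : j < m + 1 then w ⟨j, h⟩ else w 0, fun j => by simp [j.isLt]⟩
  set g : ℕ → ℝ := fun k =>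
    canoLiftPrefix Γ v k t u * canoLiftPrefix Γ (fun j => v (k + j)) (m + 1 - k) u s
  calc _ = ∑ i ∈ range m, g (i + 1) := by
        simp only [canoLift_eq_canoLiftPrefix hv,
          canoLiftPrefix.chen hΓ.continuous_deriv_apply v (m + 1) t u s]
        rw [sum_range_succ, sum_range_succ']
        simp [g]
    _ = ∑ k ∈ univ.filter (fun k : Fin (m + 1) => 0 < k.1), g k :=
        (Fin.sum_filter_val_pos_eq_sum_range m g).symm
    _ = _ := sum_congr rfl fun k _ => by
        symm
        congr 1 <;> refine canoLift_eq_canoLiftPrefix (fun j => ?_) _ _ <;> rw [← hv]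
end

section
/- Let Γ = (Γ(1),…,Γ(d)) : ℝ → ℝ^d be continuously differentiable. Then the canonical lift satisfies the shuffle (geometric) property: for all n_1, n_2 ≥ 1, all words (i_1,…,i_{n_1}), (j_1,…,j_{n_2}) with letters in {1,…,d}, and all s, t ∈ ℝ, Γ^{cano,n_1}_{ts}(i_1,…,i_{n_1}) · Γ^{cano,n_2}_{ts}(j_1,…,j_{n_2}) = Σ_S Γ^{cano,n_1+n_2}_{ts}(k^S), where the sum is over all subsets S ⊆ {1,…,n_1+n_2} with |S| = n_1 and k^S is the word placing i_1,…,i_{n_1} in order at the positions of S and j_1,…,j_{n_2} in order at the remaining positions. -/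
/-- The word of length `n₁ + n₂` obtained by placing the letters of `u` in order at the
positions of `S` and the letters of `v` in order at the remaining positions. -/
noncomputable def shuffleWord {d n₁ n₂ : ℕ} (u : Fin n₁ → Fin d) (v : Fin n₂ → Fin d)
    (S : Finset (Fin (n₁ + n₂))) (hS : S.card = n₁) (m : Fin (n₁ + n₂)) : Fin d :=
  if hm : m ∈ S then u ((S.orderIsoOfFin hS).symm ⟨m, hm⟩)
  else v ((Sᶜ.orderIsoOfFin (by rw [Finset.card_compl, hS, Fintype.card_fin]; omega)).symm
      ⟨m, Finset.mem_compl.mpr hm⟩)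

/-!
Write `X w t` for `canoLift Γ n w t s`. For nonempty `u` and `v`, both sides of the shuffle
identity vanish at `t = s`, so it suffices to compare derivatives in `t`. By the product rule
the left side has derivative `Γ'(u₀) X(tail u) X(v) + Γ'(v₀) X(u) X(tail v)`. On the right,
a shuffle starts with a letter of `u` (`0 ∈ S`) or of `v` (`0 ∉ S`), and deleting that letter
leaves a shuffle of `tail u` with `v`, resp. of `u` with `tail v`; induction on the total length
then matches the two sides. A letter at position `m` is read off from its rank
`#{y ∈ S | y < m}` in `S` (or in `Sᶜ`), which turns the deletion of the first letter into a
counting statement.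
-/

open Finset

theorem Finset.val_orderIsoOfFin_symm {α : Type*} [LinearOrder α] (s : Finset α) {k : ℕ}
    (h : #s = k) (x : s) : ((s.orderIsoOfFin h).symm x : ℕ) = #{y ∈ s | y < (x : α)} := by
  obtain ⟨i, rfl⟩ := (s.orderIsoOfFin h).surjective x
  rw [OrderIso.symm_apply_apply, coe_orderIsoOfFin_apply]
  have hbelow :
      {y ∈ s | y < s.orderEmbOfFin h i} = (Iio i).map (s.orderEmbOfFin h).toEmbedding := by
    ext y
    simp only [mem_filter, mem_map, mem_Iio, RelEmbedding.coe_toEmbedding]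
    constructor
    · rintro ⟨hy, hlt⟩
      obtain ⟨j, rfl⟩ : y ∈ Set.range (s.orderEmbOfFin h) := by rwa [range_orderEmbOfFin]
      exact ⟨j, (s.orderEmbOfFin h).lt_iff_lt.mp hlt, rfl⟩
    · rintro ⟨j, hj, rfl⟩
      exact ⟨orderEmbOfFin_mem s h j, (s.orderEmbOfFin h).lt_iff_lt.mpr hj⟩
  rw [hbelow, card_map, Fin.card_Iio]

theorem Finset.card_filter_lt_lt_card_of_mem {α : Type*} [LinearOrder α] {s : Finset α} {x : α}
    (hx : x ∈ s) : #{y ∈ s | y < x} < #s :=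
  card_lt_card (filter_ssubset.mpr ⟨x, hx, lt_irrefl x⟩)

section SumOverSubsetsOfExtremeCard

variable {α M : Type*} [Fintype α] [AddCommMonoid M]

theorem Finset.sum_subtype_card_eq_zero (f : {S : Finset α // #S = 0} → M) :
    ∑ S, f S = f ⟨∅, card_empty⟩ :=
  Fintype.sum_eq_single _ fun S hS => absurd (Subtype.ext (card_eq_zero.mp S.2)) hS

theorem Finset.sum_subtype_card_eq_card {n : ℕ} (hn : Fintype.card α = n)
    (f : {S : Finset α // #S = n} → M) : ∑ S, f S = f ⟨univ, card_univ.trans hn⟩ :=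
  Fintype.sum_eq_single _ fun S hS =>
    absurd (Subtype.ext ((card_eq_iff_eq_univ _).mp (S.2.trans hn.symm))) hS

end SumOverSubsetsOfExtremeCard

namespace Fin

variable {N k : ℕ}

theorem card_filter_map_succEmb_lt_succ (T : Finset (Fin N)) (j : Fin N) :
    #{y ∈ T.map (succEmb N) | y < j.succ} = #{y ∈ T | y < j} := by
  rw [filter_map, card_map]
  simp only [Function.comp_def, coe_succEmb, succ_lt_succ_iff]

theorem card_filter_insert_zero_lt_succ (T : Finset (Fin N)) (j : Fin N) :
    #{y ∈ insert 0 (T.map (succEmb N)) | y < j.succ} = #{y ∈ T | y < j} + 1 := by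
  rw [filter_insert, if_pos j.succ_pos, card_insert_of_notMem (by simp),
    card_filter_map_succEmb_lt_succ]

theorem compl_insert_zero_map_succEmb (T : Finset (Fin N)) :
    (insert 0 (T.map (succEmb N)))ᶜ = Tᶜ.map (succEmb N) := by
  ext m
  cases m using Fin.cases <;> simp [succ_ne_zero]

theorem compl_map_succEmb (T : Finset (Fin N)) :
    (T.map (succEmb N))ᶜ = insert 0 (Tᶜ.map (succEmb N)) := by
  rw [compl_eq_comm, compl_insert_zero_map_succEmb, compl_compl]

theorem map_succEmb_preimage_succ (S : Finset (Fin (N + 1))) :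
    (S.preimage succ (succ_injective N).injOn).map (succEmb N) = S.erase 0 := by
  ext m
  cases m using Fin.cases <;> simp [succ_ne_zero]

theorem card_insert_zero_map_succEmb {T : Finset (Fin N)} (hT : #T = k) :
    #(insert 0 (T.map (succEmb N))) = k + 1 := by
  rw [card_insert_of_notMem (by simp), card_map, hT]

theorem card_map_succEmb {T : Finset (Fin N)} (hT : #T = k) : #(T.map (succEmb N)) = k :=
  (card_map _).trans hT

theorem bijective_sumElim_insert_zero_map_succEmb :
    Function.Bijective (Sum.elim
      (fun T : {T : Finset (Fin N) // #T = k} =>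
        (⟨insert 0 (T.1.map (succEmb N)), card_insert_zero_map_succEmb T.2⟩ :
          {S : Finset (Fin (N + 1)) // #S = k + 1}))
      (fun T : {T : Finset (Fin N) // #T = k + 1} =>
        (⟨T.1.map (succEmb N), card_map_succEmb T.2⟩ :
          {S : Finset (Fin (N + 1)) // #S = k + 1}))) := by
  constructor
  · rintro (T₁ | T₁) (T₂ | T₂) h <;> have h := congrArg Subtype.val h <;>
      simp only [Sum.elim_inl, Sum.elim_inr] at h
    · congr 1; ext j; simpa using congrArg (j.succ ∈ ·) h
    · simpa using congrArg (0 ∈ ·) h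
    · simpa using congrArg (0 ∈ ·) h
    · congr 1; ext j; simpa using congrArg (j.succ ∈ ·) h
  · rintro ⟨S, hS⟩
    set T := S.preimage succ (succ_injective N).injOn
    have hT : T.map (succEmb N) = S.erase 0 := map_succEmb_preimage_succ S
    by_cases h0 : 0 ∈ S
    · refine ⟨Sum.inl ⟨T, ?_⟩, Subtype.ext ?_⟩
      · have hcard := congrArg card hT
        rwa [card_map, card_erase_of_mem h0, hS] at hcard
      · simp only [Sum.elim_inl, hT, insert_erase h0]
    · refine ⟨Sum.inr ⟨T, ?_⟩, Subtype.ext ?_⟩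
      · rw [← hS, ← erase_eq_of_notMem h0, ← hT, card_map]
      · simp only [Sum.elim_inr, hT, erase_eq_of_notMem h0]

theorem sum_subtype_card_succ {M : Type*} [AddCommMonoid M]
    (f : {S : Finset (Fin (N + 1)) // #S = k + 1} → M) :
    ∑ S, f S =
      ∑ T : {T : Finset (Fin N) // #T = k},
          f ⟨insert 0 (T.1.map (succEmb N)), card_insert_zero_map_succEmb T.2⟩ +
        ∑ T : {T : Finset (Fin N) // #T = k + 1},
          f ⟨T.1.map (succEmb N), card_map_succEmb T.2⟩ :=
  (Fintype.sum_bijective _ bijective_sumElim_insert_zero_map_succEmb _ f fun _ => rfl).symm.trans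
    (Fintype.sum_sum_type _)

end Fin

section Interleave

variable {α : Type*} {N n₁ n₂ : ℕ}

/-- `shuffleWord` with the total length `N` decoupled from `n₁ + n₂`, so that it can be reached
by induction on `N`. -/
noncomputable def interleave (u : Fin n₁ → α) (v : Fin n₂ → α) (S : Finset (Fin N))
    (hS : #S = n₁) (hSc : #Sᶜ = n₂) (m : Fin N) : α :=
  if hm : m ∈ S then u ((S.orderIsoOfFin hS).symm ⟨m, hm⟩)
  else v ((Sᶜ.orderIsoOfFin hSc).symm ⟨m, mem_compl.mpr hm⟩)

theorem card_compl_of_card_eq {S : Finset (Fin N)} (hN : n₁ + n₂ = N) (hS : #S = n₁) :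
    #Sᶜ = n₂ := by
  rw [card_compl, Fintype.card_fin]
  omega

theorem interleave_apply_of_mem (u : Fin n₁ → α) (v : Fin n₂ → α) {S : Finset (Fin N)}
    (hS : #S = n₁) (hSc : #Sᶜ = n₂) {m : Fin N} (hm : m ∈ S) :
    interleave u v S hS hSc m =
      u ⟨#{y ∈ S | y < m}, hS ▸ card_filter_lt_lt_card_of_mem hm⟩ := by
  rw [interleave, dif_pos hm]
  congr 1
  ext
  exact S.val_orderIsoOfFin_symm hS _

theorem interleave_apply_of_notMem (u : Fin n₁ → α) (v : Fin n₂ → α) {S : Finset (Fin N)}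
    (hS : #S = n₁) (hSc : #Sᶜ = n₂) {m : Fin N} (hm : m ∉ S) :
    interleave u v S hS hSc m =
      v ⟨#{y ∈ Sᶜ | y < m}, hSc ▸ card_filter_lt_lt_card_of_mem (mem_compl.mpr hm)⟩ := by
  rw [interleave, dif_neg hm]
  congr 1
  ext
  exact Sᶜ.val_orderIsoOfFin_symm hSc _

theorem interleave_empty (u : Fin n₁ → α) (v : Fin N → α)
    (hS : #(∅ : Finset (Fin N)) = n₁)
    (hSc : #(∅ : Finset (Fin N))ᶜ = N) : interleave u v ∅ hS hSc = v := by
  funext m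
  rw [interleave_apply_of_notMem _ _ _ _ (notMem_empty m)]
  congr 1
  ext
  simp [filter_gt_eq_Iio]

theorem interleave_univ (u : Fin N → α) (v : Fin n₂ → α) (hS : #(univ : Finset (Fin N)) = N)
    (hSc : #(univ : Finset (Fin N))ᶜ = n₂) : interleave u v univ hS hSc = u := by
  funext m
  rw [interleave_apply_of_mem _ _ _ _ (mem_univ m)]
  congr 1
  ext
  simp [filter_gt_eq_Iio]

theorem interleave_insert_zero_map_succEmb {n : ℕ} (u : Fin (n + 1) → α) (v : Fin n₂ → α)
    {T : Finset (Fin N)} (hS : #(insert 0 (T.map (Fin.succEmb N))) = n + 1)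
    (hSc : #(insert 0 (T.map (Fin.succEmb N)))ᶜ = n₂) (hT : #T = n) (hTc : #Tᶜ = n₂) :
    interleave u v (insert 0 (T.map (Fin.succEmb N))) hS hSc =
      Fin.cons (u 0) (interleave (Fin.tail u) v T hT hTc) := by
  funext m
  cases m using Fin.cases with
  | zero => simp [interleave_apply_of_mem]
  | succ j =>
    rw [Fin.cons_succ]
    by_cases hj : j ∈ T
    · rw [interleave_apply_of_mem _ _ _ _ (by simpa using hj), interleave_apply_of_mem _ _ _ _ hj]
      simp only [Fin.tail, Fin.succ_mk, Fin.card_filter_insert_zero_lt_succ]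
    · rw [interleave_apply_of_notMem _ _ _ _ (by simpa using hj),
        interleave_apply_of_notMem _ _ _ _ hj]
      simp only [Fin.compl_insert_zero_map_succEmb, Fin.card_filter_map_succEmb_lt_succ]

theorem interleave_map_succEmb {n : ℕ} (u : Fin n₁ → α) (v : Fin (n + 1) → α)
    {T : Finset (Fin N)} (hS : #(T.map (Fin.succEmb N)) = n₁)
    (hSc : #(T.map (Fin.succEmb N))ᶜ = n + 1) (hT : #T = n₁) (hTc : #Tᶜ = n) :
    interleave u v (T.map (Fin.succEmb N)) hS hSc =
      Fin.cons (v 0) (interleave u (Fin.tail v) T hT hTc) := by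
  funext m
  cases m using Fin.cases with
  | zero => simp [interleave_apply_of_notMem]
  | succ j =>
    rw [Fin.cons_succ]
    by_cases hj : j ∈ T
    · rw [interleave_apply_of_mem _ _ _ _ (by simpa using hj), interleave_apply_of_mem _ _ _ _ hj]
      simp only [Fin.card_filter_map_succEmb_lt_succ]
    · rw [interleave_apply_of_notMem _ _ _ _ (by simpa using hj),
        interleave_apply_of_notMem _ _ _ _ hj]
      simp only [Fin.tail, Fin.succ_mk, Fin.compl_map_succEmb, Fin.card_filter_insert_zero_lt_succ]

end Interleave

section CanonicalLift

open intervalIntegral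

variable {d : ℕ} {Γ : ℝ → Fin d → ℝ}

theorem canoLift_zero (w : Fin 0 → Fin d) (t s : ℝ) : canoLift Γ 0 w t s = 1 := rfl

theorem canoLift_succ {n : ℕ} (w : Fin (n + 1) → Fin d) (t s : ℝ) :
    canoLift Γ (n + 1) w t s =
      ∫ x in s..t, deriv (fun y => Γ y (w 0)) x * canoLift Γ n (Fin.tail w) x s := by
  rw [canoLift]
  rfl

theorem canoLift_cons {n : ℕ} (i : Fin d) (w : Fin n → Fin d) (t s : ℝ) :
    canoLift Γ (n + 1) (Fin.cons i w) t s =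
      ∫ x in s..t, deriv (fun y => Γ y i) x * canoLift Γ n w x s := by
  rw [canoLift_succ, Fin.cons_zero, Fin.tail_cons]

theorem canoLift_succ_self {n : ℕ} (w : Fin (n + 1) → Fin d) (s : ℝ) :
    canoLift Γ (n + 1) w s s = 0 := by
  rw [canoLift_succ, integral_same]

theorem continuous_canoLift (hΓ : ∀ i, Continuous (deriv fun y => Γ y i)) (s : ℝ) {n : ℕ}
    (w : Fin n → Fin d) : Continuous (fun t => canoLift Γ n w t s) := by
  induction n with
  | zero => exact continuous_const
  | succ n ih =>
    simp only [canoLift_succ]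
    exact continuous_primitive (fun a b => ((hΓ _).mul (ih _)).intervalIntegrable a b) s

theorem hasDerivAt_canoLift (hΓ : ∀ i, Continuous (deriv fun y => Γ y i)) (s : ℝ) {n : ℕ}
    (w : Fin (n + 1) → Fin d) (t : ℝ) :
    HasDerivAt (fun t => canoLift Γ (n + 1) w t s)
      (deriv (fun y => Γ y (w 0)) t * canoLift Γ n (Fin.tail w) t s) t := by
  simp only [canoLift_succ]
  exact (((hΓ _).mul (continuous_canoLift hΓ s _)).integral_hasStrictDerivAt s t).hasDerivAt

/-- Integration by parts; both boundary terms at `s` vanish. -/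
theorem canoLift_succ_mul_canoLift_succ (hΓ : ∀ i, Continuous (deriv fun y => Γ y i)) (s : ℝ)
    {a b : ℕ} (u : Fin (a + 1) → Fin d) (v : Fin (b + 1) → Fin d) (t : ℝ) :
    canoLift Γ (a + 1) u t s * canoLift Γ (b + 1) v t s =
      (∫ x in s..t, deriv (fun y => Γ y (u 0)) x *
          (canoLift Γ a (Fin.tail u) x s * canoLift Γ (b + 1) v x s)) +
        ∫ x in s..t, deriv (fun y => Γ y (v 0)) x *
          (canoLift Γ (a + 1) u x s * canoLift Γ b (Fin.tail v) x s) := by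
  have hparts := integral_deriv_mul_eq_sub (a := s) (b := t)
    (fun x _ => hasDerivAt_canoLift hΓ s u x) (fun x _ => hasDerivAt_canoLift hΓ s v x)
    (((hΓ _).mul (continuous_canoLift hΓ s _)).intervalIntegrable s t)
    (((hΓ _).mul (continuous_canoLift hΓ s _)).intervalIntegrable s t)
  rw [canoLift_succ_self, canoLift_succ_self, mul_zero, sub_zero] at hparts
  rw [← hparts, ← integral_add]
  · congr 1
    ext x
    ring
  all_goals exact ((hΓ _).mul ((continuous_canoLift hΓ s _).mul
    (continuous_canoLift hΓ s _))).intervalIntegrable s t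

theorem canoLift_mul_canoLift (hΓ : ∀ i, Continuous (deriv fun y => Γ y i)) (s t : ℝ)
    {N n₁ n₂ : ℕ} (hN : n₁ + n₂ = N) (u : Fin n₁ → Fin d) (v : Fin n₂ → Fin d) :
    canoLift Γ n₁ u t s * canoLift Γ n₂ v t s =
      ∑ S : {S : Finset (Fin N) // #S = n₁},
        canoLift Γ N (interleave u v S.1 S.2 (card_compl_of_card_eq hN S.2)) t s := by
  induction N using Nat.strong_induction_on generalizing n₁ n₂ t with
  | _ N ih =>
  rcases n₁ with _ | a
  · obtain rfl : n₂ = N := by omega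
    rw [sum_subtype_card_eq_zero, interleave_empty, canoLift_zero, one_mul]
  rcases n₂ with _ | b
  · obtain rfl : a + 1 = N := by omega
    rw [sum_subtype_card_eq_card (Fintype.card_fin _), interleave_univ, canoLift_zero, mul_one]
  obtain rfl : a + b + 2 = N := by omega
  have hleft : a + (b + 1) = a + b + 1 := by omega
  have hright : a + 1 + b = a + b + 1 := by omega
  have hint : ∀ (i : Fin d) (w : Fin (a + b + 1) → Fin d),
      IntervalIntegrable (fun x => deriv (fun y => Γ y i) x * canoLift Γ _ w x s)
        MeasureTheory.volume s t :=
    fun i w => ((hΓ i).mul (continuous_canoLift hΓ s w)).intervalIntegrable s t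
  rw [canoLift_succ_mul_canoLift_succ hΓ, Fin.sum_subtype_card_succ]
  congr 1
  · simp_rw [ih _ (by omega) _ hleft (Fin.tail u) v, mul_sum]
    rw [integral_finsetSum fun T _ => hint _ _]
    refine sum_congr rfl fun T _ => ?_
    rw [interleave_insert_zero_map_succEmb u v _ _ T.2 (card_compl_of_card_eq hleft T.2),
      canoLift_cons]
  · simp_rw [ih _ (by omega) _ hright u (Fin.tail v), mul_sum]
    rw [integral_finsetSum fun T _ => hint _ _]
    refine sum_congr rfl fun T _ => ?_
    rw [interleave_map_succEmb u v _ _ T.2 (card_compl_of_card_eq hright T.2), canoLift_cons]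

end CanonicalLift

theorem canonical_lift_shuffle_general (d : ℕ) (Γ : ℝ → Fin d → ℝ) (hΓ : ContDiff ℝ 1 Γ)
    (n₁ n₂ : ℕ)
    (u : Fin n₁ → Fin d) (v : Fin n₂ → Fin d) (s t : ℝ) :
    canoLift Γ n₁ u t s * canoLift Γ n₂ v t s =
      ∑ S : {S : Finset (Fin (n₁ + n₂)) // S.card = n₁},
        canoLift Γ (n₁ + n₂) (shuffleWord u v S.1 S.2) t s :=
  canoLift_mul_canoLift (fun i => (contDiff_pi.mp hΓ i).continuous_deriv le_rfl) s t rfl u v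

/-- The canonical lift of a continuously differentiable path satisfies the
geometric (shuffle) property. -/
theorem canonical_lift_shuffle (d : ℕ) (Γ : ℝ → Fin d → ℝ) (hΓ : ContDiff ℝ 1 Γ)
    (n₁ n₂ : ℕ) (h₁ : 1 ≤ n₁) (h₂ : 1 ≤ n₂)
    (u : Fin n₁ → Fin d) (v : Fin n₂ → Fin d) (s t : ℝ) :
    canoLift Γ n₁ u t s * canoLift Γ n₂ v t s =
      ∑ S : {S : Finset (Fin (n₁ + n₂)) // S.card = n₁},
        canoLift Γ (n₁ + n₂) (shuffleWord u v S.1 S.2) t s :=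
  canonical_lift_shuffle_general d Γ hΓ n₁ n₂ u v s t
end

section
/- Tree Chen property: let F be a decorated rooted forest on n vertices with decoration ℓ valued in {1,…,d}, and let Γ : ℝ → ℝ^d be continuously differentiable. Then for all s, u, t ∈ ℝ, I_F(Γ)_{ts} − I_F(Γ)_{tu} − I_F(Γ)_{us} = Σ_c I_{Roo_c F}(Γ)_{tu} · I_{Lea_c F}(Γ)_{us}, the sum running over all admissible cuts c of F. -/
/-!
Induct on `n` by removing the largest vertex `n + 1`; it is integrated out first, and it is
either an isolated root or a leaf hanging from `m = p (n + 1)`. In the second case it is absorbed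
into the integrand of `m`, which becomes `x ↦ f m x * ∫_s^x f (n + 1)`, so the identity has to be
proved for arbitrary continuous integrands `f v` rather than for the derivatives of `Γ`.
Including the two trivial cuts, the cuts of the larger forest are the cuts `c` of the smaller one
together with `insert (n + 1) c` whenever `n + 1` is not on the leaf side of `c`. Pairing the terms
of `c` and `insert (n + 1) c` reduces the induction step to `∫_s^t = ∫_s^u + ∫_u^t` for the
integral of `f (n + 1)` and to linearity of the iterated integral in the integrand of one vertex.
The two trivial cuts contribute `I_{tu}` and `I_{us}`.
-/

/-- `w` is a strict descendant of `v` in the forest with parent map `p`. -/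
def descends (p : ℕ → ℕ) (w v : ℕ) : Prop := ∃ k : ℕ, 0 < k ∧ p^[k] w = v

/-- Nested iterated integral over the forest with vertex set `V` and parent map `p`,
each vertex `v` carrying an integrand `f v`; vertices whose parent lies outside `V` are
roots and are integrated from `s` to `t`, the others from `s` to the parent's variable.
The innermost (i.e. maximal) vertices are integrated out first. -/
noncomputable def forestIntAux (s : ℝ) (p : ℕ → ℕ) (V : Finset ℕ) (f : ℕ → ℝ → ℝ) (t : ℝ) : ℝ :=
  if hV : V.Nonempty then
    if p (V.max' hV) ∈ V.erase (V.max' hV) then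
      forestIntAux s p (V.erase (V.max' hV))
        (Function.update f (p (V.max' hV))
          fun x => f (p (V.max' hV)) x * ∫ y in s..x, f (V.max' hV) y) t
    else (∫ y in s..t, f (V.max' hV) y) * forestIntAux s p (V.erase (V.max' hV)) f t
  else 1
termination_by V.card
decreasing_by
  all_goals exact Finset.card_erase_lt_of_mem (V.max'_mem hV)

/-- The iterated integral of a path `Γ` over the decorated forest with vertex set `V`,
parent map `p` and decoration `ℓ`. -/
noncomputable def forestIntegral {d : ℕ} (Γ : ℝ → Fin d → ℝ) (ℓ : ℕ → Fin d) (p : ℕ → ℕ)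
    (V : Finset ℕ) (t s : ℝ) : ℝ :=
  forestIntAux s p V (fun v x => deriv (fun y => Γ y (ℓ v)) x) t

/-- The leaves part `Lea_c F`: vertices lying in the cut `c` or descending from it. -/
noncomputable def leaPart (n : ℕ) (p : ℕ → ℕ) (c : Finset ℕ) : Finset ℕ :=
  letI := Classical.decPred fun w => w ∈ c ∨ ∃ v ∈ c, descends p w v
  (Finset.Icc 1 n).filter fun w => w ∈ c ∨ ∃ v ∈ c, descends p w v

/-- The root part `Roo_c F`: the remaining vertices. -/
noncomputable def rooPart (n : ℕ) (p : ℕ → ℕ) (c : Finset ℕ) : Finset ℕ :=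
  Finset.Icc 1 n \ leaPart n p c

/-- An admissible cut of the forest on `{1,…,n}` with parent map `p`: an antichain of
vertices (for the descendant relation), excluding the empty cut and the cut consisting of
all the roots. -/
def IsAdmissibleCut (n : ℕ) (p : ℕ → ℕ) (c : Finset ℕ) : Prop :=
  c ⊆ Finset.Icc 1 n ∧ (∀ v ∈ c, ∀ w ∈ c, ¬ descends p w v) ∧
    c.Nonempty ∧ c ≠ (Finset.Icc 1 n).filter fun v => p v = 0

noncomputable def admissibleCuts (n : ℕ) (p : ℕ → ℕ) : Finset (Finset ℕ) :=
  letI := Classical.decPred (IsAdmissibleCut n p)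
  (Finset.Icc 1 n).powerset.filter (IsAdmissibleCut n p)

open Finset intervalIntegral

theorem continuous_primitive_of_continuous {k : ℝ → ℝ} (hk : Continuous k) (s : ℝ) :
    Continuous fun x => ∫ y in s..x, k y :=
  continuous_primitive (fun _ _ => hk.intervalIntegrable _ _) s

/-- The integrands left after integrating out a leaf `v` with parent `m`, as `forestIntAux` does. -/
noncomputable def absorbLeaf (s : ℝ) (f : ℕ → ℝ → ℝ) (m v : ℕ) : ℕ → ℝ → ℝ :=
  Function.update f m fun x => f m x * ∫ y in s..x, f v y

section AbsorbLeaf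

variable {s : ℝ} {f : ℕ → ℝ → ℝ}

theorem continuous_absorbLeaf (hf : ∀ w, Continuous (f w)) (m v : ℕ) :
    ∀ w, Continuous (absorbLeaf s f m v w) := by
  intro w
  rw [absorbLeaf, Function.update_apply]
  split_ifs
  · exact (hf m).mul (continuous_primitive_of_continuous (hf v) s)
  · exact hf w

theorem absorbLeaf_update_of_ne {m v b : ℕ} (hm : m ≠ v) (hb : b ≠ v) (k : ℝ → ℝ) :
    absorbLeaf s (Function.update f v k) m b = Function.update (absorbLeaf s f m b) v k := by
  simp only [absorbLeaf, Function.update_of_ne hm, Function.update_of_ne hb]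
  exact Function.update_comm hm.symm _ _ _

theorem absorbLeaf_update_parent {v b : ℕ} (hb : b ≠ v) (k : ℝ → ℝ) :
    absorbLeaf s (Function.update f v k) v b =
      Function.update f v fun x => k x * ∫ y in s..x, f b y := by
  simp only [absorbLeaf, Function.update_of_ne hb, Function.update_self, Function.update_idem]

theorem absorbLeaf_update_leaf {m v : ℕ} (hm : m ≠ v) (k : ℝ → ℝ) :
    absorbLeaf s (Function.update f v k) m v =
      Function.update (Function.update f m fun x => f m x * ∫ y in s..x, k y) v k := by
  simp only [absorbLeaf, Function.update_of_ne hm, Function.update_self]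
  exact Function.update_comm hm.symm _ _ _

end AbsorbLeaf

theorem integral_const_mul_add {g h : ℝ → ℝ} (hg : Continuous g) (hh : Continuous h)
    (a s x : ℝ) :
    ∫ y in s..x, a * g y + h y = a * (∫ y in s..x, g y) + ∫ y in s..x, h y := by
  rw [integral_add ((hg.const_mul a).intervalIntegrable _ _) (hh.intervalIntegrable _ _),
    integral_const_mul]

section ForestIntAux

variable {s t : ℝ} {p : ℕ → ℕ} {f : ℕ → ℝ → ℝ}

theorem forestIntAux_empty : forestIntAux s p ∅ f t = 1 := by
  rw [forestIntAux, dif_neg Finset.not_nonempty_empty]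

theorem forestIntAux_insert {v : ℕ} {W : Finset ℕ} (hW : ∀ w ∈ W, w < v) :
    forestIntAux s p (insert v W) f t =
      if p v ∈ W then forestIntAux s p W (absorbLeaf s f (p v) v) t
      else (∫ y in s..t, f v y) * forestIntAux s p W f t := by
  have hmax : (insert v W).max' (insert_nonempty v W) = v :=
    le_antisymm (max'_le _ _ _ <| forall_mem_insert _ _ _ |>.2 ⟨le_rfl, fun w hw => (hW w hw).le⟩)
      (le_max' _ _ (mem_insert_self v W))
  rw [forestIntAux, dif_pos (insert_nonempty v W)]
  simp only [hmax, erase_insert fun hv => lt_irrefl v (hW v hv)]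
  rfl

theorem forestIntAux_congr {V : Finset ℕ} {g : ℕ → ℝ → ℝ} (h : ∀ v ∈ V, f v = g v) :
    forestIntAux s p V f t = forestIntAux s p V g t := by
  induction V using Finset.induction_on_max generalizing f g with
  | empty => rw [forestIntAux_empty, forestIntAux_empty]
  | insert a W hW ih =>
    have ha := h a (mem_insert_self a W)
    have hW' : ∀ v ∈ W, f v = g v := fun v hv => h v (mem_insert_of_mem hv)
    rw [forestIntAux_insert hW, forestIntAux_insert hW]
    split_ifs with hpa
    · exact ih fun v hv => by simp only [absorbLeaf, Function.update_apply, hW' v hv, hW' _ hpa, ha]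
    · rw [ha, ih hW']

theorem forestIntAux_update_of_notMem {V : Finset ℕ} {v : ℕ} (hv : v ∉ V) (g : ℝ → ℝ) :
    forestIntAux s p V (Function.update f v g) t = forestIntAux s p V f t :=
  forestIntAux_congr fun _ hw => Function.update_of_ne (ne_of_mem_of_not_mem hw hv) _ _

end ForestIntAux

section ForestIntAuxLinear

variable {s t : ℝ} {p : ℕ → ℕ}

theorem forestIntAux_update_mul_add {V : Finset ℕ} {f : ℕ → ℝ → ℝ} {v : ℕ} (hv : v ∈ V)
    (hf : ∀ w, Continuous (f w)) (a : ℝ) {g h : ℝ → ℝ} (hg : Continuous g) (hh : Continuous h) :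
    forestIntAux s p V (Function.update f v fun x => a * g x + h x) t =
      a * forestIntAux s p V (Function.update f v g) t
        + forestIntAux s p V (Function.update f v h) t := by
  induction V using Finset.induction_on_max generalizing f v g h with
  | empty => simp at hv
  | insert b W hW ih =>
    simp only [forestIntAux_insert hW]
    rcases eq_or_ne v b with rfl | hvb
    · have hvW : v ∉ W := fun h => lt_irrefl v (hW v h)
      split_ifs with hpv
      · have hne : p v ≠ v := ne_of_mem_of_not_mem hpv hvW
        have hsplit : (fun x => f (p v) x * ∫ y in s..x, a * g y + h y) =
            fun x => a * (f (p v) x * ∫ y in s..x, g y) + f (p v) x * ∫ y in s..x, h y :=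
          funext fun x => by rw [integral_const_mul_add hg hh]; ring
        simp only [absorbLeaf_update_leaf hne, forestIntAux_update_of_notMem hvW]
        rw [hsplit]
        exact ih hpv hf ((hf _).mul (continuous_primitive_of_continuous hg s))
          ((hf _).mul (continuous_primitive_of_continuous hh s))
      · simp only [Function.update_self, forestIntAux_update_of_notMem hvW,
          integral_const_mul_add hg hh]
        ring
    · have hvW : v ∈ W := (mem_insert.1 hv).resolve_left hvb
      simp only [Function.update_of_ne hvb.symm]
      split_ifs with hpb
      · rcases eq_or_ne (p b) v with hpbv | hpbv
        · have hsplit : (fun x => (a * g x + h x) * ∫ y in s..x, f b y) =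
              fun x => a * (g x * ∫ y in s..x, f b y) + h x * ∫ y in s..x, f b y :=
            funext fun x => by ring
          simp only [hpbv, absorbLeaf_update_parent hvb.symm]
          rw [hsplit]
          exact ih hvW hf (hg.mul (continuous_primitive_of_continuous (hf b) s))
            (hh.mul (continuous_primitive_of_continuous (hf b) s))
        · simp only [absorbLeaf_update_of_ne hpbv hvb.symm]
          exact ih hvW (continuous_absorbLeaf hf _ _) hg hh
      · rw [ih hvW hf hg hh]
        ring

end ForestIntAuxLinear

section Descendants

open scoped Classical

variable {n : ℕ} {p : ℕ → ℕ}

theorem descends_iff {w v : ℕ} : descends p w v ↔ p w = v ∨ descends p (p w) v := by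
  constructor
  · rintro ⟨_ | _ | k, hk, hkv⟩
    · omega
    · exact Or.inl hkv
    · exact Or.inr ⟨k + 1, k.succ_pos, hkv⟩
  · rintro (h | ⟨k, -, hkv⟩)
    · exact ⟨1, one_pos, h⟩
    · exact ⟨k + 1, k.succ_pos, hkv⟩

theorem eq_zero_of_descends_zero (hp0 : p 0 = 0) {v : ℕ} (h : descends p 0 v) : v = 0 := by
  obtain ⟨k, -, rfl⟩ := h
  exact Function.iterate_fixed hp0 k

theorem descends_lt (hp : ∀ v, 1 ≤ v → v ≤ n → p v < v) (hp0 : p 0 = 0) {w v : ℕ}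
    (hw1 : 1 ≤ w) (hwn : w ≤ n) (h : descends p w v) : v < w := by
  induction w using Nat.strong_induction_on with
  | _ w ih =>
    have hpw := hp w hw1 hwn
    rcases descends_iff.1 h with rfl | h
    · exact hpw
    · rcases Nat.eq_zero_or_pos (p w) with h0 | hpos
      · rw [h0] at h
        rw [eq_zero_of_descends_zero hp0 h]
        omega
      · exact (ih _ hpw hpos (by omega) h).trans hpw

def LeafSide (p : ℕ → ℕ) (c : Finset ℕ) (w : ℕ) : Prop := w ∈ c ∨ ∃ v ∈ c, descends p w v

variable {c : Finset ℕ}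

theorem leafSide_iff {w : ℕ} : LeafSide p c w ↔ w ∈ c ∨ LeafSide p c (p w) := by
  simp only [LeafSide, descends_iff (w := w)]
  constructor
  · rintro (h | ⟨v, hv, rfl | h⟩)
    exacts [Or.inl h, Or.inr (Or.inl hv), Or.inr (Or.inr ⟨v, hv, h⟩)]
  · rintro (h | h | ⟨v, hv, h⟩)
    exacts [Or.inl h, Or.inr ⟨_, h, Or.inl rfl⟩, Or.inr ⟨v, hv, Or.inr h⟩]

theorem not_leafSide_zero (hp0 : p 0 = 0) (hc : 0 ∉ c) : ¬ LeafSide p c 0 := by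
  rintro (h | ⟨v, hv, hd⟩)
  · exact hc h
  · exact hc (eq_zero_of_descends_zero hp0 hd ▸ hv)

theorem leafSide_insert_iff (hp : ∀ v, 1 ≤ v → v ≤ n → p v < v) (hp0 : p 0 = 0) {a w : ℕ}
    (ha : n < a) (hw : w ∈ Icc 1 n) : LeafSide p (insert a c) w ↔ LeafSide p c w := by
  obtain ⟨hw1, hwn⟩ := mem_Icc.1 hw
  have hwa : w ≠ a := by omega
  have hda : ¬ descends p w a := fun h => by have := descends_lt hp hp0 hw1 hwn h; omega
  simp only [LeafSide, mem_insert, exists_eq_or_imp, hwa, hda, false_or]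

theorem leaPart_eq_filter : leaPart n p c = (Icc 1 n).filter (LeafSide p c) := by
  ext w
  simp [leaPart, LeafSide]

theorem rooPart_eq_filter : rooPart n p c = (Icc 1 n).filter (fun w => ¬ LeafSide p c w) := by
  rw [rooPart, leaPart_eq_filter, filter_not]

theorem leaPart_subset : leaPart n p c ⊆ Icc 1 n := by
  rw [leaPart_eq_filter]
  exact filter_subset _ _

theorem rooPart_subset : rooPart n p c ⊆ Icc 1 n := sdiff_subset

theorem leaPart_succ :
    leaPart (n + 1) p c = if LeafSide p c (n + 1) then insert (n + 1) (leaPart n p c)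
      else leaPart n p c := by
  rw [leaPart_eq_filter, leaPart_eq_filter, ← insert_Icc_right_eq_Icc_add_one (by omega),
    filter_insert]

theorem rooPart_succ :
    rooPart (n + 1) p c = if LeafSide p c (n + 1) then rooPart n p c
      else insert (n + 1) (rooPart n p c) := by
  rw [rooPart_eq_filter, rooPart_eq_filter, ← insert_Icc_right_eq_Icc_add_one (by omega),
    filter_insert, ite_not]

theorem leaPart_insert_of_lt (hp : ∀ v, 1 ≤ v → v ≤ n → p v < v) (hp0 : p 0 = 0) {a : ℕ}
    (ha : n < a) : leaPart n p (insert a c) = leaPart n p c := by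
  simp only [leaPart_eq_filter]
  exact filter_congr fun w hw => leafSide_insert_iff hp hp0 ha hw

theorem rooPart_insert_of_lt (hp : ∀ v, 1 ≤ v → v ≤ n → p v < v) (hp0 : p 0 = 0) {a : ℕ}
    (ha : n < a) : rooPart n p (insert a c) = rooPart n p c := by
  rw [rooPart, rooPart, leaPart_insert_of_lt hp hp0 ha]

theorem leaPart_succ_insert_succ (hp : ∀ v, 1 ≤ v → v ≤ n → p v < v) (hp0 : p 0 = 0) :
    leaPart (n + 1) p (insert (n + 1) c) = insert (n + 1) (leaPart n p c) := by
  rw [leaPart_succ, if_pos (show LeafSide p _ _ from Or.inl (mem_insert_self _ _)),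
    leaPart_insert_of_lt hp hp0 n.lt_succ_self]

theorem rooPart_succ_insert_succ (hp : ∀ v, 1 ≤ v → v ≤ n → p v < v) (hp0 : p 0 = 0) :
    rooPart (n + 1) p (insert (n + 1) c) = rooPart n p c := by
  rw [rooPart_succ, if_pos (show LeafSide p _ _ from Or.inl (mem_insert_self _ _)),
    rooPart_insert_of_lt hp hp0 n.lt_succ_self]

end Descendants

section Cuts

open scoped Classical

variable {n : ℕ} {p : ℕ → ℕ}

def IsDescAntichain (p : ℕ → ℕ) (c : Finset ℕ) : Prop := ∀ v ∈ c, ∀ w ∈ c, ¬ descends p w v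

/-- Admissible cuts together with the two trivial ones, `∅` and the set of roots. -/
noncomputable def antichains (n : ℕ) (p : ℕ → ℕ) : Finset (Finset ℕ) :=
  (Icc 1 n).powerset.filter (IsDescAntichain p)

theorem mem_antichains {c : Finset ℕ} :
    c ∈ antichains n p ↔ c ⊆ Icc 1 n ∧ IsDescAntichain p c := by
  rw [antichains, mem_filter, mem_powerset]

theorem isDescAntichain_insert_succ_iff (hp : ∀ v, 1 ≤ v → v ≤ n + 1 → p v < v) (hp0 : p 0 = 0)
    {c : Finset ℕ} (hc : c ⊆ Icc 1 n) :
    IsDescAntichain p (insert (n + 1) c) ↔ IsDescAntichain p c ∧ ¬ LeafSide p c (n + 1) := by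
  have hself : ¬ descends p (n + 1) (n + 1) := fun h =>
    lt_irrefl _ (descends_lt hp hp0 (by omega) le_rfl h)
  have hbelow : ∀ w ∈ c, ¬ descends p w (n + 1) := fun w hw h => by
    obtain ⟨hw1, hwn⟩ := mem_Icc.1 (hc hw)
    have := descends_lt hp hp0 hw1 (by omega) h
    omega
  have hnotin : n + 1 ∉ c := fun h => by have := (mem_Icc.1 (hc h)).2; omega
  simp only [IsDescAntichain, LeafSide, forall_mem_insert, hnotin, false_or, not_exists, not_and]
  constructor
  · rintro ⟨-, hc'⟩
    exact ⟨fun v hv => (hc' v hv).2, fun v hv => (hc' v hv).1⟩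
  · rintro ⟨hc', hnd⟩
    exact ⟨⟨hself, hbelow⟩, fun v hv => ⟨hnd v hv, hc' v hv⟩⟩

theorem sum_antichains_succ {M : Type*} [AddCommMonoid M]
    (hp : ∀ v, 1 ≤ v → v ≤ n + 1 → p v < v) (hp0 : p 0 = 0) (F : Finset ℕ → M) :
    ∑ c ∈ antichains (n + 1) p, F c =
      ∑ c ∈ antichains n p,
        (F c + if LeafSide p c (n + 1) then 0 else F (insert (n + 1) c)) := by
  simp only [antichains, sum_filter]
  rw [← insert_Icc_right_eq_Icc_add_one (by omega), sum_powerset_insert (by simp),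
    ← sum_add_distrib]
  refine sum_congr rfl fun c hc => ?_
  rw [isDescAntichain_insert_succ_iff hp hp0 (mem_powerset.1 hc)]
  by_cases hA : IsDescAntichain p c <;> by_cases hL : LeafSide p c (n + 1) <;> simp [hA, hL]

end Cuts

section ChenStep

open scoped Classical

variable {n : ℕ} {p : ℕ → ℕ} {f : ℕ → ℝ → ℝ} {s u t : ℝ} {c : Finset ℕ}

noncomputable def cutTerm (n : ℕ) (p : ℕ → ℕ) (f : ℕ → ℝ → ℝ) (s u t : ℝ) (c : Finset ℕ) : ℝ :=
  forestIntAux u p (rooPart n p c) f t * forestIntAux s p (leaPart n p c) f u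

theorem forall_lt_succ_of_subset_Icc {W : Finset ℕ} (hW : W ⊆ Icc 1 n) : ∀ w ∈ W, w < n + 1 :=
  fun _ hw => Nat.lt_succ_of_le (mem_Icc.1 (hW hw)).2

theorem cutTerm_succ_add_cutTerm_insert_of_root (hp : ∀ v, 1 ≤ v → v ≤ n → p v < v)
    (hp0 : p 0 = 0) (hf : ∀ w, Continuous (f w)) (hm : p (n + 1) ∉ Icc 1 n)
    (hL : ¬ LeafSide p c (n + 1)) :
    cutTerm (n + 1) p f s u t c + cutTerm (n + 1) p f s u t (insert (n + 1) c) =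
      (∫ y in s..t, f (n + 1) y) * cutTerm n p f s u t c := by
  rw [cutTerm, cutTerm, cutTerm, rooPart_succ_insert_succ hp hp0, leaPart_succ_insert_succ hp hp0,
    rooPart_succ, leaPart_succ, if_neg hL, if_neg hL,
    forestIntAux_insert (forall_lt_succ_of_subset_Icc rooPart_subset),
    if_neg fun h => hm (rooPart_subset h),
    forestIntAux_insert (forall_lt_succ_of_subset_Icc leaPart_subset),
    if_neg fun h => hm (leaPart_subset h), ← integral_add_adjacent_intervals (a := s) (b := u)
      (c := t) ((hf _).intervalIntegrable _ _) ((hf _).intervalIntegrable _ _)]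
  ring

theorem cutTerm_succ_add_cutTerm_insert_of_not_leafSide (hp : ∀ v, 1 ≤ v → v ≤ n → p v < v)
    (hp0 : p 0 = 0) (hf : ∀ w, Continuous (f w)) (hm : p (n + 1) ∈ Icc 1 n)
    (hL : ¬ LeafSide p c (n + 1)) :
    cutTerm (n + 1) p f s u t c + cutTerm (n + 1) p f s u t (insert (n + 1) c) =
      cutTerm n p (absorbLeaf s f (p (n + 1)) (n + 1)) s u t c := by
  have hmL : ¬ LeafSide p c (p (n + 1)) := fun h => hL (leafSide_iff.2 (Or.inr h))
  have hmroo : p (n + 1) ∈ rooPart n p c := by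
    rw [rooPart_eq_filter, mem_filter]; exact ⟨hm, hmL⟩
  have hmlea : p (n + 1) ∉ leaPart n p c := by
    rw [leaPart_eq_filter, mem_filter]; exact fun h => hmL h.2
  rw [cutTerm, cutTerm, cutTerm, rooPart_succ_insert_succ hp hp0, leaPart_succ_insert_succ hp hp0,
    rooPart_succ, leaPart_succ, if_neg hL, if_neg hL,
    forestIntAux_insert (forall_lt_succ_of_subset_Icc rooPart_subset), if_pos hmroo,
    forestIntAux_insert (forall_lt_succ_of_subset_Icc leaPart_subset), if_neg hmlea]
  simp only [absorbLeaf, forestIntAux_update_of_notMem hmlea]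
  have hsplit : (fun x => f (p (n + 1)) x * ∫ y in s..x, f (n + 1) y) = fun x =>
      (∫ y in s..u, f (n + 1) y) * f (p (n + 1)) x + f (p (n + 1)) x * ∫ y in u..x, f (n + 1) y :=
    funext fun x => by
      rw [← integral_add_adjacent_intervals (b := u) ((hf _).intervalIntegrable _ _)
        ((hf _).intervalIntegrable _ _)]
      ring
  have hcont : Continuous fun x => f (p (n + 1)) x * ∫ y in u..x, f (n + 1) y :=
    (hf _).mul (continuous_primitive_of_continuous (hf _) u)
  rw [hsplit, forestIntAux_update_mul_add hmroo hf _ (hf _) hcont, Function.update_eq_self]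
  ring

theorem cutTerm_succ_of_leafSide (hc : n + 1 ∉ c) (hm : p (n + 1) ∈ Icc 1 n)
    (hL : LeafSide p c (n + 1)) :
    cutTerm (n + 1) p f s u t c = cutTerm n p (absorbLeaf s f (p (n + 1)) (n + 1)) s u t c := by
  have hmL : LeafSide p c (p (n + 1)) := (leafSide_iff.1 hL).resolve_left hc
  have hmlea : p (n + 1) ∈ leaPart n p c := by
    rw [leaPart_eq_filter, mem_filter]; exact ⟨hm, hmL⟩
  have hmroo : p (n + 1) ∉ rooPart n p c := by
    rw [rooPart_eq_filter, mem_filter]; exact fun h => h.2 hmL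
  rw [cutTerm, cutTerm, rooPart_succ, leaPart_succ, if_pos hL, if_pos hL,
    forestIntAux_insert (forall_lt_succ_of_subset_Icc leaPart_subset), if_pos hmlea, absorbLeaf,
    forestIntAux_update_of_notMem hmroo]

theorem forestIntAux_Icc_eq_sum_cutTerm (hp0 : p 0 = 0) (hp : ∀ v, 1 ≤ v → v ≤ n → p v < v)
    (hf : ∀ w, Continuous (f w)) :
    forestIntAux s p (Icc 1 n) f t = ∑ c ∈ antichains n p, cutTerm n p f s u t c := by
  induction n generalizing f with
  | zero =>
    have h0 : antichains 0 p = {∅} := by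
      ext c
      simp +contextual [mem_antichains, IsDescAntichain]
    simp [h0, cutTerm, rooPart, leaPart, forestIntAux_empty]
  | succ n ih =>
    have hpn : ∀ v, 1 ≤ v → v ≤ n → p v < v := fun v h1 h2 => hp v h1 (by omega)
    rw [sum_antichains_succ hp hp0, ← insert_Icc_right_eq_Icc_add_one (by omega),
      forestIntAux_insert (forall_lt_succ_of_subset_Icc subset_rfl)]
    split_ifs with hm
    · rw [ih hpn (continuous_absorbLeaf hf _ _)]
      refine sum_congr rfl fun c hc => ?_
      have hnc : n + 1 ∉ c := fun h => by
        have := (mem_Icc.1 ((mem_antichains.1 hc).1 h)).2; omega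
      by_cases hL : LeafSide p c (n + 1)
      · rw [if_pos hL, add_zero, cutTerm_succ_of_leafSide hnc hm hL]
      · rw [if_neg hL, cutTerm_succ_add_cutTerm_insert_of_not_leafSide hpn hp0 hf hm hL]
    · have hroot : p (n + 1) = 0 := by
        have := hp (n + 1) (by omega) le_rfl
        simp only [mem_Icc] at hm
        omega
      rw [ih hpn hf, mul_sum]
      refine sum_congr rfl fun c hc => ?_
      have hsub := (mem_antichains.1 hc).1
      have hL : ¬ LeafSide p c (n + 1) := by
        rw [leafSide_iff, hroot]
        rintro (h | h)
        · have := (mem_Icc.1 (hsub h)).2; omega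
        · exact not_leafSide_zero hp0 (fun h => by simpa using hsub h) h
      rw [if_neg hL, cutTerm_succ_add_cutTerm_insert_of_root hpn hp0 hf hm hL]

end ChenStep

section TrivialCuts

open scoped Classical

variable {n : ℕ} {p : ℕ → ℕ}

def roots (n : ℕ) (p : ℕ → ℕ) : Finset ℕ := (Icc 1 n).filter fun v => p v = 0

theorem mem_roots {v : ℕ} : v ∈ roots n p ↔ v ∈ Icc 1 n ∧ p v = 0 := mem_filter

theorem empty_mem_antichains : ∅ ∈ antichains n p :=
  mem_antichains.2 ⟨empty_subset _, by simp [IsDescAntichain]⟩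

theorem roots_mem_antichains (hp0 : p 0 = 0) : roots n p ∈ antichains n p := by
  refine mem_antichains.2 ⟨filter_subset _ _, fun v hv w hw h => ?_⟩
  have hv1 := (mem_Icc.1 (mem_roots.1 hv).1).1
  rcases descends_iff.1 h with h | h
  · have := (mem_roots.1 hw).2
    omega
  · rw [(mem_roots.1 hw).2] at h
    have := eq_zero_of_descends_zero hp0 h
    omega

theorem roots_nonempty (hn : 1 ≤ n) (hp : ∀ v, 1 ≤ v → v ≤ n → p v < v) :
    (roots n p).Nonempty :=
  ⟨1, mem_roots.2 ⟨mem_Icc.2 ⟨le_rfl, hn⟩, by have := hp 1 le_rfl hn; omega⟩⟩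

theorem leaPart_roots (hp : ∀ v, 1 ≤ v → v ≤ n → p v < v) : leaPart n p (roots n p) = Icc 1 n := by
  rw [leaPart_eq_filter, filter_eq_self]
  intro w hw
  induction w using Nat.strong_induction_on with
  | _ w ih =>
    obtain ⟨hw1, hwn⟩ := mem_Icc.1 hw
    rcases Nat.eq_zero_or_pos (p w) with h0 | hpos
    · exact Or.inl (mem_roots.2 ⟨hw, h0⟩)
    · have hpw := hp w hw1 hwn
      exact leafSide_iff.2 (Or.inr (ih _ hpw (mem_Icc.2 ⟨hpos, by omega⟩)))

theorem rooPart_roots (hp : ∀ v, 1 ≤ v → v ≤ n → p v < v) : rooPart n p (roots n p) = ∅ := by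
  rw [rooPart, leaPart_roots hp, sdiff_self, bot_eq_empty]

theorem leaPart_empty : leaPart n p ∅ = ∅ := by
  simp [leaPart]

theorem rooPart_empty : rooPart n p ∅ = Icc 1 n := by
  rw [rooPart, leaPart_empty, sdiff_empty]

theorem admissibleCuts_eq : admissibleCuts n p = ((antichains n p).erase ∅).erase (roots n p) := by
  ext c
  simp only [admissibleCuts, IsAdmissibleCut, roots, mem_filter, mem_powerset, mem_erase,
    mem_antichains, IsDescAntichain, nonempty_iff_ne_empty]
  tauto

end TrivialCuts

/-- **Tree Chen property**. -/
theorem tree_chen_property (d n : ℕ) (hn : 1 ≤ n) (p : ℕ → ℕ)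
    (hp : ∀ v, 1 ≤ v → v ≤ n → p v < v) (hp0 : p 0 = 0)
    (ℓ : ℕ → Fin d) (Γ : ℝ → Fin d → ℝ) (hΓ : ContDiff ℝ 1 Γ) (s u t : ℝ) :
    forestIntegral Γ ℓ p (Finset.Icc 1 n) t s
        - forestIntegral Γ ℓ p (Finset.Icc 1 n) t u
        - forestIntegral Γ ℓ p (Finset.Icc 1 n) u s =
      ∑ c ∈ admissibleCuts n p,
        forestIntegral Γ ℓ p (rooPart n p c) t u * forestIntegral Γ ℓ p (leaPart n p c) u s := by
  have hf (v : ℕ) : Continuous (deriv fun y => Γ y (ℓ v)) :=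
    ((contDiff_pi.1 hΓ) (ℓ v)).continuous_deriv le_rfl
  have hchen := forestIntAux_Icc_eq_sum_cutTerm (s := s) (u := u) (t := t) hp0 hp hf
  rw [← add_sum_erase _ _ empty_mem_antichains, ← add_sum_erase _ _
      (mem_erase.2 ⟨(roots_nonempty hn hp).ne_empty, roots_mem_antichains hp0⟩),
    ← admissibleCuts_eq, cutTerm, cutTerm, leaPart_empty, rooPart_empty, leaPart_roots hp,
    rooPart_roots hp, forestIntAux_empty, forestIntAux_empty] at hchen
  simp only [forestIntegral]
  rw [hchen]
  simp only [cutTerm]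
  ring
end

section
/- Let f : ℝ → ℝ be smooth and compactly supported with ∫_ℝ f(x) dx = 0 (equivalently, ℱf(0) = 0). Then the function ξ ↦ ℱf(ξ)/(iξ) is absolutely integrable on ℝ (the singularity at ξ = 0 being removable), and the formal integral ∫^t f := (2π)^{−1/2} ∫_ℝ ℱf(ξ) e^{itξ}/(iξ) dξ is an antiderivative of f in the sense that for all s, t ∈ ℝ, ∫^t f − ∫^s f = ∫_s^t f(x) dx. -/
/-!
Since `f` has mean zero, its primitive `F t = ∫_{-∞}^t f` is again smooth and compactly
supported, and `ℱf(ξ) = iξ ℱF(ξ)`. Hence `ℱf(ξ)/(iξ) = ℱF(ξ)` for `ξ ≠ 0`, which is integrable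
because `F` is a Schwartz function, and Fourier inversion identifies `∫^t f` with `F t`.
-/

open MeasureTheory

/-- The Fourier transform with the normalization `ℱf(ξ) = (2π)^{-1/2} ∫ f(x) e^{-ixξ} dx`. -/
noncomputable def fourierT (f : ℝ → ℝ) (ξ : ℝ) : ℂ :=
  ((Real.sqrt (2 * Real.pi) : ℝ) : ℂ)⁻¹ *
    ∫ x : ℝ, (f x : ℂ) * Complex.exp (-(Complex.I * (x : ℂ) * (ξ : ℂ)))

/-- The formal integral `∫^t f := (2π)^{-1/2} ∫ ℱf(ξ) e^{itξ}/(iξ) dξ`. -/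
noncomputable def formalIntegral (f : ℝ → ℝ) (t : ℝ) : ℂ :=
  ((Real.sqrt (2 * Real.pi) : ℝ) : ℂ)⁻¹ *
    ∫ ξ : ℝ, fourierT f ξ * Complex.exp (Complex.I * (t : ℂ) * (ξ : ℂ)) / (Complex.I * (ξ : ℂ))

open Real Complex FourierTransform
open scoped ContDiff

lemma fourierT_eq_fourier (h : ℝ → ℝ) (ξ : ℝ) :
    fourierT h ξ = ((√(2 * π) : ℝ) : ℂ)⁻¹ * 𝓕 (fun x => (h x : ℂ)) (ξ / (2 * π)) := by
  rw [fourierT, Real.fourier_eq']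
  congr 1
  refine integral_congr_ae (.of_forall fun x => ?_)
  simp only [RCLike.inner_apply, conj_trivial, smul_eq_mul]
  push_cast
  field_simp

lemma fourierT_of_hasDerivAt {g g' : ℝ → ℝ} (hg : ∀ x, HasDerivAt g (g' x) x)
    (hgi : Integrable g) (hg'i : Integrable g') (ξ : ℝ) :
    fourierT g' ξ = I * ξ * fourierT g ξ := by
  have hderiv : deriv (fun x => (g x : ℂ)) = fun x => (g' x : ℂ) :=
    funext fun x => (hg x).ofReal_comp.deriv
  have key := Real.fourier_deriv hgi.ofReal (fun x => (hg x).ofReal_comp.differentiableAt)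
    (hderiv ▸ hg'i.ofReal)
  rw [hderiv] at key
  simp only [fourierT_eq_fourier, key, smul_eq_mul]
  push_cast
  field_simp

lemma integrable_fourierT_of_contDiff {g : ℝ → ℝ} (hg : ContDiff ℝ ∞ g)
    (hs : HasCompactSupport g) : Integrable (fourierT g) := by
  let G := (hs.comp_left Complex.ofReal_zero).toSchwartzMap (ofRealCLM.contDiff.comp hg)
  have hG : Integrable fun w => 𝓕 (fun x => (g x : ℂ)) (w * (2 * π)⁻¹) :=
    (𝓕 G).integrable.comp_mul_right' (by positivity)
  convert hG.const_mul ((√(2 * π) : ℝ) : ℂ)⁻¹ using 1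
  ext ξ
  rw [fourierT_eq_fourier, div_eq_mul_inv]

lemma fourierT_inversion {g : ℝ → ℝ} (hc : Continuous g) (hi : Integrable g)
    (hFi : Integrable (fourierT g)) (t : ℝ) :
    ((√(2 * π) : ℝ) : ℂ)⁻¹ * ∫ ξ, fourierT g ξ * exp (I * t * ξ) = g t := by
  have hFG : Integrable (𝓕 (fun x => (g x : ℂ))) := by
    refine ((hFi.comp_mul_left' two_pi_pos.ne').const_mul ((√(2 * π) : ℝ) : ℂ)).congr
      (.of_forall fun w => ?_)
    simp only [fourierT_eq_fourier]
    field_simp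
  -- the integrand of Mathlib's `𝓕⁻ (𝓕 g) t`, reached from ours by the substitution `ξ = 2πw`
  set K : ℝ → ℂ := fun w => exp (↑(2 * π * (w * t)) * I) • 𝓕 (fun x => (g x : ℂ)) w
  have hK : ∫ w, K w = g t := by
    have hc' : Continuous fun x => (g x : ℂ) := continuous_ofReal.comp hc
    rw [← congrFun (hc'.fourierInv_fourier_eq hi.ofReal hFG) t, Real.fourierInv_eq']
    simp [K, mul_comm]
  have hrescale : ∀ ξ : ℝ, fourierT g ξ * exp (I * t * ξ) =
      ((√(2 * π) : ℝ) : ℂ)⁻¹ * K ((2 * π)⁻¹ * ξ) := by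
    intro ξ
    simp only [K, fourierT_eq_fourier, smul_eq_mul]
    push_cast
    field_simp
  simp_rw [hrescale]
  rw [integral_const_mul, Measure.integral_comp_inv_mul_left, abs_of_pos two_pi_pos, hK,
    real_smul, ← mul_assoc, ← mul_inv, ← ofReal_mul, mul_self_sqrt two_pi_pos.le]
  field_simp

lemma exists_hasCompactSupport_hasDerivAt_of_integral_eq_zero {f : ℝ → ℝ} (hf : Continuous f)
    (hs : HasCompactSupport f) (h0 : ∫ x, f x = 0) :
    ∃ F : ℝ → ℝ, HasCompactSupport F ∧ ∀ x, HasDerivAt F (f x) x := by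
  obtain ⟨R, -, hR⟩ := hs.exists_pos_le_norm
  refine ⟨fun t => ∫ x in (-R)..t, f x,
    HasCompactSupport.intro (isCompact_Icc (a := -R) (b := R)) fun t ht => ?_,
    fun x => intervalIntegral.integral_hasDerivAt_right (hf.intervalIntegrable _ _)
      (hf.stronglyMeasurableAtFilter _ _) hf.continuousAt⟩
  simp only [Set.mem_Icc, not_and_or, not_le] at ht
  rcases ht with ht | ht
  · refine intervalIntegral.integral_zero_ae (.of_forall fun x hx => hR x ?_)
    rw [Set.uIoc_of_ge ht.le] at hx
    exact le_trans (by linarith [hx.2]) (neg_le_abs x)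
  · rw [intervalIntegral.integral_eq_integral_of_support_subset, h0]
    intro x hx
    have : |x| < R := lt_of_not_ge fun h => hx (hR x h)
    exact ⟨(abs_lt.1 this).1, by linarith [(abs_lt.1 this).2]⟩

/-- For a smooth compactly supported `f` with vanishing mean, `ξ ↦ ℱf(ξ)/(iξ)` is
absolutely integrable and the formal integral `∫^t f` is an antiderivative of `f`. -/
theorem formal_integral_is_antiderivative (f : ℝ → ℝ)
    (hf : ContDiff ℝ (⊤ : ℕ∞) f) (hsupp : HasCompactSupport f)
    (hzero : (∫ x : ℝ, f x) = 0) :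
    Integrable (fun ξ : ℝ => fourierT f ξ / (Complex.I * (ξ : ℂ))) ∧
    ∀ s t : ℝ, formalIntegral f t - formalIntegral f s = ∫ x in s..t, (f x : ℂ) := by
  obtain ⟨F, hFs, hF⟩ :=
    exists_hasCompactSupport_hasDerivAt_of_integral_eq_zero hf.continuous hsupp hzero
  have hF_smooth : ContDiff ℝ ∞ F := by
    rw [contDiff_infty_iff_deriv, show deriv F = f from funext fun x => (hF x).deriv]
    exact ⟨fun x => (hF x).differentiableAt, hf⟩
  have hFi : Integrable F := hF_smooth.continuous.integrable_of_hasCompactSupport hFs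
  have hfi : Integrable f := hf.continuous.integrable_of_hasCompactSupport hsupp
  have hFFi : Integrable (fourierT F) := integrable_fourierT_of_contDiff hF_smooth hFs
  have hdiv : ∀ᵐ ξ : ℝ, fourierT f ξ / (I * ξ) = fourierT F ξ := by
    filter_upwards [Measure.ae_ne volume 0] with ξ hξ
    rw [fourierT_of_hasDerivAt hF hFi hfi, mul_div_cancel_left₀ _ (by simpa using hξ)]
  have hformal : ∀ t, formalIntegral f t = F t := fun t => by
    rw [formalIntegral, ← fourierT_inversion hF_smooth.continuous hFi hFFi t]
    congr 1
    refine integral_congr_ae ?_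
    filter_upwards [hdiv] with ξ hξ
    rw [mul_div_right_comm, hξ]
  refine ⟨hFFi.congr (hdiv.mono fun _ h => h.symm), fun s t => ?_⟩
  rw [hformal, hformal, intervalIntegral.integral_ofReal,
    intervalIntegral.integral_eq_sub_of_hasDerivAt (fun x _ => hF x)
      (hf.continuous.intervalIntegrable _ _)]
  exact (ofReal_sub _ _).symm
end
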